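/- arXiv:2003.04999 — 2 statements merged into one kernel-verified Lean document; each statement's English description precedes it below -/
import Mathlib

section
/- Assume a₁ > 0, σ > −1 + 2/n (case (i)) and λ ≥ 0. Then for any Y₀, Y₁ ∈ ℝⁿ the Cauchy problem D_t²Y(t) + A(t)Y(t) + λ|Y(t)|^{p−1}Y(t) = 0, Y(0) = Y₀, D_tY(0) = Y₁, has a global solution, i.e., a C¹ solution defined on the whole interval [0,∞). -/
open MeasureTheory Set

/-- The scale function `a(t)` of the homogeneous and isotropic spacetime. -/
noncomputable def scaleFun (n : ℕ) (σ a₀ a₁ : ℝ) (t : ℝ) : ℝ :=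
  if σ = -1 then a₀ * Real.exp (a₁ * t / a₀)
  else a₀ * (1 + (n : ℝ) * (1 + σ) * a₁ * t / (2 * a₀)) ^ (2 / ((n : ℝ) * (1 + σ)))

/-- `q₀(t) = (d/dt)(a(t)²) / a(t)²`. -/
noncomputable def q0Fun (n : ℕ) (σ a₀ a₁ : ℝ) (t : ℝ) : ℝ :=
  deriv (fun s => (scaleFun n σ a₀ a₁ s) ^ 2) t / (scaleFun n σ a₀ a₁ t) ^ 2

/-- `A(t) = -q₀(t)²/4 - (1/2) (d/dt) q₀(t)`. -/
noncomputable def AFun (n : ℕ) (σ a₀ a₁ : ℝ) (t : ℝ) : ℝ :=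
  -(q0Fun n σ a₀ a₁ t) ^ 2 / 4 - (1 / 2) * deriv (q0Fun n σ a₀ a₁) t

/-!
In case (i) the scale factor is a power `a₀ (1 + c t) ^ e` with `c ≥ 0`, so that
`A(t) = e (1 - e) c² / (1 + c t)²` is continuous on `[0, ∞)`. As a first-order system in
`z = (Y, Y')`, the equation has a vector field that is Lipschitz on bounded sets, uniformly for
`t` in compact intervals, so Picard–Lindelöf gives local solutions whose time of existence only
depends on a bound for the initial value. The energy `‖Y‖² + ‖Y'‖² + 2λ/(p+1) ‖Y‖^(p+1)` has
derivative `2 (1 - A) ⟪Y, Y'⟫ ≤ (1 + sup |A|) · energy` (this is where `λ ≥ 0` enters), so by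
Gronwall it stays bounded on every `[0, T]`. Hence local solutions can be continued to `[0, T]` in
finitely many uniform steps, and by uniqueness these patch together on `[0, ∞)`.
-/

open Metric Filter Topology
open scoped NNReal RealInnerProductSpace

theorem rpow_sub_rpow_mul_le {q r s : ℝ} (hq : 0 ≤ q) (hr : 0 ≤ r) (hrs : r ≤ s) :
    (s ^ q - r ^ q) * r ≤ q * s ^ q * (s - r) := by
  rcases hrs.eq_or_lt with rfl | hrs
  · simp
  obtain ⟨ξ, hξ, hslope⟩ := exists_hasDerivAt_eq_slope (fun x : ℝ => x ^ q)
    (fun x => q * x ^ (q - 1)) hrs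
    (fun x _ => (Real.continuousAt_rpow_const x q (Or.inr hq)).continuousWithinAt)
    (fun x hx => Real.hasDerivAt_rpow_const (Or.inl (hr.trans_lt hx.1).ne'))
  have hξ0 : 0 < ξ := hr.trans_lt hξ.1
  have hmvt : s ^ q - r ^ q = q * ξ ^ (q - 1) * (s - r) := by
    rw [hslope]; field_simp
  have hξr : ξ ^ (q - 1) * r ≤ s ^ q := calc
    ξ ^ (q - 1) * r ≤ ξ ^ (q - 1) * ξ := by gcongr; exact hξ.1.le
    _ = ξ ^ q := by rw [← Real.rpow_add_one hξ0.ne']; ring_nf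
    _ ≤ s ^ q := Real.rpow_le_rpow hξ0.le hξ.2.le hq
  calc (s ^ q - r ^ q) * r = q * (s - r) * (ξ ^ (q - 1) * r) := by rw [hmvt]; ring
    _ ≤ q * (s - r) * s ^ q := by gcongr
    _ = q * s ^ q * (s - r) := by ring

theorem norm_rpow_smul_sub_rpow_smul_le {E : Type*} [SeminormedAddCommGroup E] [NormedSpace ℝ E]
    {q R : ℝ} (hq : 0 ≤ q) {x y : E} (hx : ‖x‖ ≤ R) (hy : ‖y‖ ≤ R) :
    ‖‖y‖ ^ q • y - ‖x‖ ^ q • x‖ ≤ (1 + q) * R ^ q * ‖y - x‖ := by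
  wlog hxy : ‖x‖ ≤ ‖y‖ generalizing x y
  · rw [norm_sub_rev, norm_sub_rev y]
    exact this hy hx (le_of_not_ge hxy)
  have hxq : ‖x‖ ^ q ≤ ‖y‖ ^ q := Real.rpow_le_rpow (norm_nonneg x) hxy hq
  have hyq : ‖y‖ ^ q ≤ R ^ q := Real.rpow_le_rpow (norm_nonneg y) hy hq
  have hsplit : ‖y‖ ^ q • y - ‖x‖ ^ q • x = ‖y‖ ^ q • (y - x) + (‖y‖ ^ q - ‖x‖ ^ q) • x := by
    rw [smul_sub, sub_smul]; abel
  have hR : 0 ≤ R := (norm_nonneg y).trans hy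
  calc ‖‖y‖ ^ q • y - ‖x‖ ^ q • x‖
      ≤ ‖y‖ ^ q * ‖y - x‖ + (‖y‖ ^ q - ‖x‖ ^ q) * ‖x‖ := by
        rw [hsplit]
        refine (norm_add_le _ _).trans_eq ?_
        rw [norm_smul, norm_smul, Real.norm_of_nonneg (by positivity),
          Real.norm_of_nonneg (sub_nonneg.2 hxq)]
    _ ≤ R ^ q * ‖y - x‖ + q * ‖y‖ ^ q * (‖y‖ - ‖x‖) :=
        add_le_add (by gcongr) (rpow_sub_rpow_mul_le hq (norm_nonneg x) hxy)
    _ ≤ R ^ q * ‖y - x‖ + q * R ^ q * ‖y - x‖ := by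
        gcongr
        exact norm_sub_norm_le y x
    _ = (1 + q) * R ^ q * ‖y - x‖ := by ring

section Prod

variable {E F : Type*} [NormedAddCommGroup E] [NormedSpace ℝ E] [NormedAddCommGroup F]
  [NormedSpace ℝ F]

theorem HasDerivWithinAt.fst
    {f : ℝ → E × F} {f' : E × F} {s : Set ℝ} {t : ℝ} (h : HasDerivWithinAt f f' s t) :
    HasDerivWithinAt (fun t => (f t).1) f'.1 s t :=
  HasFDerivWithinAt.fst h

theorem HasDerivWithinAt.snd
    {f : ℝ → E × F} {f' : E × F} {s : Set ℝ} {t : ℝ} (h : HasDerivWithinAt f f' s t) :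
    HasDerivWithinAt (fun t => (f t).2) f'.2 s t :=
  HasFDerivWithinAt.snd h

end Prod

theorem exists_norm_le_of_lipschitzOnWith {E F : Type*} [SeminormedAddCommGroup E]
    [SeminormedAddCommGroup F] {v : ℝ → E → F} {a b R : ℝ} {K : ℝ≥0}
    (hK : ∀ t ∈ Icc a b, LipschitzOnWith K (v t) (closedBall 0 R))
    (hcont : ContinuousOn (v · 0) (Icc a b)) :
    ∃ C : ℝ≥0, ∀ t ∈ Icc a b, ∀ x ∈ closedBall 0 R, ‖v t x‖ ≤ C := by
  obtain ⟨C₀, hC₀⟩ := isCompact_Icc.exists_bound_of_continuousOn hcont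
  refine ⟨(C₀ + K * R).toNNReal, fun t ht x hx => ?_⟩
  have hx' : ‖x‖ ≤ R := mem_closedBall_zero_iff.1 hx
  have hlip := (hK t ht).norm_sub_le hx (mem_closedBall_self ((norm_nonneg x).trans hx'))
  rw [sub_zero] at hlip
  calc ‖v t x‖ ≤ ‖v t 0‖ + ‖v t x - v t 0‖ := norm_le_norm_add_norm_sub' _ _
    _ ≤ C₀ + K * R := add_le_add (hC₀ t ht) (hlip.trans (by gcongr))
    _ ≤ (C₀ + K * R).toNNReal := Real.le_coe_toNNReal _

section IntegralCurve

variable {E : Type*} [NormedAddCommGroup E] [NormedSpace ℝ E] {v : ℝ → E → E}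

theorem IsIntegralCurveOn.congr {γ γ' : ℝ → E} {s : Set ℝ} (h : IsIntegralCurveOn γ v s)
    (hγ : EqOn γ' γ s) : IsIntegralCurveOn γ' v s := fun t ht => by
  rw [hγ ht]
  exact (h t ht).congr hγ (hγ ht)

theorem IsIntegralCurveOn.union {γ : ℝ → E} {s s' : Set ℝ} (hs : IsClosed s) (hs' : IsClosed s')
    (h : IsIntegralCurveOn γ v s) (h' : IsIntegralCurveOn γ v s') :
    IsIntegralCurveOn γ v (s ∪ s') := by
  -- away from a closed set, every vector is a derivative within it
  have within {u : Set ℝ} (hu : IsClosed u) (hγ : IsIntegralCurveOn γ v u) (t : ℝ) :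
      HasDerivWithinAt γ (v t (γ t)) u t := by
    by_cases ht : t ∈ u
    · exact hγ t ht
    · exact HasFDerivWithinAt.of_notMem_closure (by rwa [hu.closure_eq])
  exact fun t _ => (within hs h t).union (within hs' h' t)

theorem IsIntegralCurveOn.piecewise_Iic {γ₁ γ₂ : ℝ → E} {a b c : ℝ} (hab : a ≤ b) (hbc : b ≤ c)
    (h₁ : IsIntegralCurveOn γ₁ v (Icc a b)) (h₂ : IsIntegralCurveOn γ₂ v (Icc b c))
    (hb : γ₁ b = γ₂ b) : IsIntegralCurveOn ((Iic b).piecewise γ₁ γ₂) v (Icc a c) := by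
  have heq₁ : EqOn ((Iic b).piecewise γ₁ γ₂) γ₁ (Icc a b) :=
    (piecewise_eqOn _ _ _).mono fun t ht => ht.2
  have heq₂ : EqOn ((Iic b).piecewise γ₁ γ₂) γ₂ (Icc b c) := fun t ht => by
    rcases ht.1.eq_or_lt with rfl | hbt
    · simpa using hb
    · exact piecewise_eq_of_notMem _ _ _ (not_le.2 hbt)
  rw [← Icc_union_Icc_eq_Icc hab hbc]
  exact (h₁.congr heq₁).union isClosed_Icc isClosed_Icc (h₂.congr heq₂)

theorem IsIntegralCurveOn.eqOn_Icc {γ γ' : ℝ → E} {a b : ℝ}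
    (hv : ∀ R, ∃ K, ∀ t ∈ Ico a b, LipschitzOnWith K (v t) (closedBall 0 R))
    (hγ : IsIntegralCurveOn γ v (Icc a b)) (hγ' : IsIntegralCurveOn γ' v (Icc a b))
    (ha : γ a = γ' a) : EqOn γ γ' (Icc a b) := by
  obtain ⟨R, hR⟩ := isCompact_Icc.exists_bound_of_continuousOn hγ.continuousOn
  obtain ⟨R', hR'⟩ := isCompact_Icc.exists_bound_of_continuousOn hγ'.continuousOn
  obtain ⟨K, hK⟩ := hv (max R R')
  have hIci {f : ℝ → E} (hf : IsIntegralCurveOn f v (Icc a b)) (t : ℝ) (ht : t ∈ Ico a b) :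
      HasDerivWithinAt f (v t (f t)) (Ici t) t :=
    (hf t (Ico_subset_Icc_self ht)).mono_of_mem_nhdsWithin (Icc_mem_nhdsGE_of_mem ht)
  refine ODE_solution_unique_of_mem_Icc_right (s := fun _ => closedBall 0 (max R R')) hK
    hγ.continuousOn (hIci hγ) (fun t ht => ?_) hγ'.continuousOn (hIci hγ') (fun t ht => ?_) ha
  · exact mem_closedBall_zero_iff.2 ((hR t (Ico_subset_Icc_self ht)).trans (le_max_left _ _))
  · exact mem_closedBall_zero_iff.2 ((hR' t (Ico_subset_Icc_self ht)).trans (le_max_right _ _))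

variable [CompleteSpace E]

theorem IsIntegralCurveOn.exists_extend {γ : ℝ → E} {a s t₁ : ℝ} {K C : ℝ≥0} (has : a ≤ s)
    (hst : s ≤ t₁) (hγ : IsIntegralCurveOn γ v (Icc a s))
    (hK : ∀ t ∈ Icc s t₁, LipschitzOnWith K (v t) (closedBall (γ s) 1))
    (hcont : ∀ x ∈ closedBall (γ s) 1, ContinuousOn (v · x) (Icc s t₁))
    (hC : ∀ t ∈ Icc s t₁, ∀ x ∈ closedBall (γ s) 1, ‖v t x‖ ≤ C) (hCt : C * (t₁ - s) ≤ 1) :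
    ∃ γ' : ℝ → E, EqOn γ' γ (Icc a s) ∧ IsIntegralCurveOn γ' v (Icc a t₁) := by
  obtain ⟨γ₂, hγ₂s, hγ₂⟩ := IsPicardLindelof.exists_eq_forall_mem_Icc_hasDerivWithinAt₀
    (t₀ := ⟨s, left_mem_Icc.2 hst⟩) (a := 1)
    ⟨hK, hcont, hC, by simpa [max_eq_left (sub_nonneg.2 hst)] using hCt⟩
  exact ⟨(Iic s).piecewise γ γ₂, (piecewise_eqOn _ _ _).mono fun t ht => ht.2,
    hγ.piecewise_Iic has hst hγ₂ hγ₂s.symm⟩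

theorem exists_isIntegralCurveOn_Icc_of_norm_le {x₀ : E} {T B : ℝ} (hT : 0 ≤ T)
    (hv : ∀ R, ∃ K : ℝ≥0, ∀ t ∈ Icc 0 T, LipschitzOnWith K (v t) (closedBall 0 R))
    (hcont : ∀ x, ContinuousOn (v · x) (Icc 0 T))
    (hB : ∀ s ∈ Icc 0 T, ∀ γ : ℝ → E, γ 0 = x₀ → IsIntegralCurveOn γ v (Icc 0 s) → ‖γ s‖ ≤ B) :
    ∃ γ : ℝ → E, γ 0 = x₀ ∧ IsIntegralCurveOn γ v (Icc 0 T) := by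
  obtain ⟨K, hK⟩ := hv (B + 1)
  obtain ⟨C, hC⟩ := exists_norm_le_of_lipschitzOnWith hK (hcont 0)
  set δ : ℝ := 1 / (C + 1)
  have hδ : 0 < δ := by positivity
  have hCδ : C * δ ≤ 1 := by
    rw [mul_one_div, div_le_one (by positivity)]
    linarith
  -- the step `δ` is uniform because `γ s` stays in the ball of radius `B`
  have step : ∀ s ∈ Icc 0 T, ∀ γ : ℝ → E, γ 0 = x₀ → IsIntegralCurveOn γ v (Icc 0 s) →
      ∃ γ' : ℝ → E, γ' 0 = x₀ ∧ IsIntegralCurveOn γ' v (Icc 0 (min (s + δ) T)) := by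
    intro s hs γ hγ0 hγ
    have hsub : Icc s (min (s + δ) T) ⊆ Icc 0 T := Icc_subset_Icc hs.1 (min_le_right _ _)
    have hball : closedBall (γ s) 1 ⊆ closedBall 0 (B + 1) := by
      refine closedBall_subset_closedBall' ?_
      rw [dist_zero_right]
      linarith [hB s hs γ hγ0 hγ]
    obtain ⟨γ', hγ'γ, hγ'⟩ := hγ.exists_extend hs.1 (le_min (by linarith) hs.2)
      (fun t ht => (hK t (hsub ht)).mono hball) (fun x _ => (hcont x).mono hsub)
      (fun t ht x hx => hC t (hsub ht) x (hball hx))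
      (le_trans (by gcongr; linarith [min_le_left (s + δ) T]) hCδ)
    exact ⟨γ', (hγ'γ (left_mem_Icc.2 hs.1)).trans hγ0, hγ'⟩
  have hk : ∀ k : ℕ, ∃ γ : ℝ → E, γ 0 = x₀ ∧ IsIntegralCurveOn γ v (Icc 0 (min (k * δ) T)) := by
    intro k
    induction k with
    | zero =>
      refine ⟨fun _ => x₀, rfl, fun t _ => HasFDerivWithinAt.of_subsingleton ?_⟩
      exact subsingleton_Icc_of_ge (by simp [hT])
    | succ k ih =>
      obtain ⟨γ, hγ0, hγ⟩ := ih
      obtain ⟨γ', hγ'0, hγ'⟩ := step _ ⟨le_min (by positivity) hT, min_le_right _ _⟩ γ hγ0 hγ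
      refine ⟨γ', hγ'0, ?_⟩
      rwa [← min_add_add_right, min_assoc, min_eq_right (by linarith : T ≤ T + δ), ← add_one_mul,
        ← Nat.cast_succ] at hγ'
  obtain ⟨k, hk'⟩ := exists_nat_ge (T / δ)
  obtain ⟨γ, hγ0, hγ⟩ := hk k
  rw [min_eq_right ((div_le_iff₀ hδ).1 hk')] at hγ
  exact ⟨γ, hγ0, hγ⟩

theorem exists_isIntegralCurveOn_Ici_of_norm_le {x₀ : E}
    (hv : ∀ T R, ∃ K : ℝ≥0, ∀ t ∈ Icc 0 T, LipschitzOnWith K (v t) (closedBall 0 R))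
    (hcont : ∀ x, ContinuousOn (v · x) (Ici 0))
    (hB : ∀ T, ∃ B, ∀ s ∈ Icc 0 T, ∀ γ : ℝ → E, γ 0 = x₀ → IsIntegralCurveOn γ v (Icc 0 s) →
      ‖γ s‖ ≤ B) :
    ∃ γ : ℝ → E, γ 0 = x₀ ∧ IsIntegralCurveOn γ v (Ici 0) := by
  have hk (k : ℕ) : ∃ γ : ℝ → E, γ 0 = x₀ ∧ IsIntegralCurveOn γ v (Icc 0 k) := by
    obtain ⟨B, hB⟩ := hB k
    exact exists_isIntegralCurveOn_Icc_of_norm_le k.cast_nonneg (hv k)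
      (fun x => (hcont x).mono Icc_subset_Ici_self) hB
  choose Γ hΓ0 hΓ using hk
  have hagree (j k : ℕ) (hjk : j ≤ k) : EqOn (Γ j) (Γ k) (Icc 0 j) := by
    refine (hΓ j).eqOn_Icc (fun R => ?_)
      ((hΓ k).mono (Icc_subset_Icc_right (by exact_mod_cast hjk))) (by rw [hΓ0, hΓ0])
    obtain ⟨K, hK⟩ := hv j R
    exact ⟨K, fun t ht => hK t (Ico_subset_Icc_self ht)⟩
  have hΓk (k : ℕ) : EqOn (fun t => Γ ⌈t⌉₊ t) (Γ k) (Icc 0 k) := fun t ht => by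
    rcases le_total ⌈t⌉₊ k with h | h
    · exact hagree _ _ h ⟨ht.1, Nat.le_ceil t⟩
    · exact (hagree _ _ h ht).symm
  refine ⟨fun t => Γ ⌈t⌉₊ t, by simpa using hΓ0 0, fun t ht => ?_⟩
  obtain ⟨k, hk⟩ := exists_nat_gt t
  have hnhds : Icc 0 (k : ℝ) ∈ 𝓝[Ici 0] t := by
    rw [← Ici_inter_Iic]
    exact inter_mem_nhdsWithin _ (Iic_mem_nhds hk)
  exact ((hΓ k).congr (hΓk k) t ⟨ht, hk.le⟩).mono_of_mem_nhdsWithin hnhds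

end IntegralCurve

section Oscillator

variable {E : Type*} [NormedAddCommGroup E] [NormedSpace ℝ E] {A : ℝ → ℝ} {lam p M : ℝ}

/-- The equation `Y'' + A(t) Y + λ ‖Y‖^(p-1) Y = 0` as a first-order system in `(Y, Y')`. -/
noncomputable def oscillatorField (A : ℝ → ℝ) (lam p t : ℝ) (z : E × E) : E × E :=
  (z.2, -(A t • z.1) - (lam * ‖z.1‖ ^ (p - 1)) • z.1)

theorem continuousOn_oscillatorField {s : Set ℝ} (hA : ContinuousOn A s)
    (z : E × E) : ContinuousOn (oscillatorField A lam p · z) s :=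
  continuousOn_const.prodMk ((hA.smul continuousOn_const).neg.sub continuousOn_const)

theorem oscillatorField_lipschitzOnWith {t ρ : ℝ} (hlam : 0 ≤ lam) (hp : 1 ≤ p)
    (hA : |A t| ≤ M) (hρ : 0 ≤ ρ) :
    LipschitzOnWith (1 + M + lam * p * ρ ^ (p - 1)).toNNReal (oscillatorField A lam p t)
      (closedBall (0 : E × E) ρ) := by
  have hM : 0 ≤ M := (abs_nonneg _).trans hA
  have hnl₀ : 0 ≤ lam * p * ρ ^ (p - 1) := by
    have : 0 ≤ p := by linarith
    positivity
  refine LipschitzOnWith.of_dist_le_mul fun z hz z' hz' => ?_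
  rw [mem_closedBall_zero_iff] at hz hz'
  rw [Real.coe_toNNReal _ (by linarith), dist_eq_norm, dist_eq_norm]
  have h₁ : ‖z.1 - z'.1‖ ≤ ‖z - z'‖ := norm_fst_le (z - z')
  have h₂ : ‖z.2 - z'.2‖ ≤ ‖z - z'‖ := norm_snd_le (z - z')
  have hnl := norm_rpow_smul_sub_rpow_smul_le (sub_nonneg.2 hp)
    ((norm_fst_le z').trans hz') ((norm_fst_le z).trans hz)
  rw [add_sub_cancel] at hnl
  refine max_le (h₂.trans (le_mul_of_one_le_left (norm_nonneg _) (by linarith))) ?_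
  calc ‖-(A t • z.1) - (lam * ‖z.1‖ ^ (p - 1)) • z.1
        - (-(A t • z'.1) - (lam * ‖z'.1‖ ^ (p - 1)) • z'.1)‖
      = ‖-(A t • (z.1 - z'.1)) - lam • (‖z.1‖ ^ (p - 1) • z.1 - ‖z'.1‖ ^ (p - 1) • z'.1)‖ := by
        rw [smul_sub, smul_sub, mul_smul, mul_smul]; abel_nf
    _ ≤ |A t| * ‖z.1 - z'.1‖ + lam * (p * ρ ^ (p - 1) * ‖z.1 - z'.1‖) := by
        refine norm_sub_le_of_le ?_ ?_
        · rw [norm_neg, norm_smul, Real.norm_eq_abs]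
        · rw [norm_smul, Real.norm_of_nonneg hlam]
          gcongr
    _ ≤ (1 + M + lam * p * ρ ^ (p - 1)) * ‖z - z'‖ := by
        nlinarith [norm_nonneg (z - z'), norm_nonneg (z.1 - z'.1)]

end Oscillator

section Energy

variable {E : Type*} [NormedAddCommGroup E] {A : ℝ → ℝ} {lam p M : ℝ}

/-- `‖z.1‖ ^ 2` replaces the term `A(t) ‖z.1‖ ^ 2` of the physical energy, whose sign is not
controlled, so that the energy bounds `‖z‖`. -/
noncomputable def oscillatorEnergy (lam p : ℝ) (z : E × E) : ℝ :=
  ‖z.1‖ ^ 2 + ‖z.2‖ ^ 2 + 2 * lam / (p + 1) * ‖z.1‖ ^ (p + 1)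

theorem sq_norm_add_sq_norm_le_oscillatorEnergy (hlam : 0 ≤ lam) (hp : -1 < p) (z : E × E) :
    ‖z.1‖ ^ 2 + ‖z.2‖ ^ 2 ≤ oscillatorEnergy lam p z := by
  have : 0 < p + 1 := by linarith
  unfold oscillatorEnergy
  have : 0 ≤ 2 * lam / (p + 1) * ‖z.1‖ ^ (p + 1) := by positivity
  linarith

theorem norm_le_sqrt_oscillatorEnergy (hlam : 0 ≤ lam) (hp : -1 < p) (z : E × E) :
    ‖z‖ ≤ √(oscillatorEnergy lam p z) := by
  have h := sq_norm_add_sq_norm_le_oscillatorEnergy hlam hp z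
  refine max_le ?_ ?_ <;> refine Real.le_sqrt_of_sq_le ?_ <;>
    nlinarith [sq_nonneg ‖z.1‖, sq_nonneg ‖z.2‖]

variable [InnerProductSpace ℝ E]

theorem HasDerivWithinAt.oscillatorEnergy (hp : 0 < p) {γ : ℝ → E × E} {s : Set ℝ} {t : ℝ}
    (hγ : HasDerivWithinAt γ (oscillatorField A lam p t (γ t)) s t) :
    HasDerivWithinAt (fun t => oscillatorEnergy lam p (γ t))
      (2 * (1 - A t) * ⟪(γ t).1, (γ t).2⟫) s t := by
  have hy := hγ.fst
  have hpow := ((hasFDerivAt_norm_rpow (γ t).1 (by linarith : 1 < p + 1)).comp_hasDerivWithinAt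
    t hy).const_mul (2 * lam / (p + 1))
  refine ((hy.norm_sq.add hγ.snd.norm_sq).add hpow).congr_deriv ?_
  simp only [oscillatorField, FunLike.coe_smul, Pi.smul_apply, innerSL_apply_apply,
    smul_eq_mul, inner_sub_right, inner_neg_right, real_inner_smul_right, real_inner_comm (γ t).2]
  rw [show p + 1 - 2 = p - 1 by ring]
  field_simp
  ring

theorem IsIntegralCurveOn.oscillatorEnergy_le (hlam : 0 ≤ lam) (hp : 0 < p) {γ : ℝ → E × E}
    {a b : ℝ} (hA : ∀ t ∈ Icc a b, |A t| ≤ M)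
    (hγ : IsIntegralCurveOn γ (oscillatorField A lam p) (Icc a b)) :
    ∀ t ∈ Icc a b, oscillatorEnergy lam p (γ t) ≤
      oscillatorEnergy lam p (γ a) * Real.exp ((1 + M) * (t - a)) := by
  have hG (t : ℝ) (ht : t ∈ Icc a b) := (hγ t ht).oscillatorEnergy hp
  have hG' : ∀ t ∈ Ico a b, 2 * (1 - A t) * ⟪(γ t).1, (γ t).2⟫
      ≤ (1 + M) * oscillatorEnergy lam p (γ t) + 0 := by
    intro t ht
    have hAt := abs_le.1 (hA t (Ico_subset_Icc_self ht))
    have hinner := abs_le.1 (abs_real_inner_le_norm (γ t).1 (γ t).2)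
    have hE := sq_norm_add_sq_norm_le_oscillatorEnergy (p := p) hlam (by linarith) (γ t)
    nlinarith [sq_nonneg (‖(γ t).1‖ - ‖(γ t).2‖), norm_nonneg (γ t).1, norm_nonneg (γ t).2,
      mul_nonneg (norm_nonneg (γ t).1) (norm_nonneg (γ t).2)]
  intro t ht
  simpa only [gronwallBound_ε0] using le_gronwallBound_of_liminf_deriv_right_le
    (fun t ht => (hG t ht).continuousWithinAt)
    (fun t ht r hr => ((hG t (Ico_subset_Icc_self ht)).mono_of_mem_nhdsWithin
      (Icc_mem_nhdsGE_of_mem ht)).liminf_right_slope_le hr) le_rfl hG' t ht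

theorem exists_isIntegralCurveOn_oscillatorField [CompleteSpace E] (hA : ContinuousOn A (Ici 0))
    (hlam : 0 ≤ lam) (hp : 1 < p) (z₀ : E × E) :
    ∃ γ : ℝ → E × E, γ 0 = z₀ ∧ IsIntegralCurveOn γ (oscillatorField A lam p) (Ici 0) := by
  have hAT (T : ℝ) : ∃ M, ∀ t ∈ Icc 0 T, |A t| ≤ M :=
    isCompact_Icc.exists_bound_of_continuousOn (hA.mono Icc_subset_Ici_self)
  refine exists_isIntegralCurveOn_Ici_of_norm_le (fun T R => ?_) (continuousOn_oscillatorField hA)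
    (fun T => ?_)
  · obtain ⟨M, hM⟩ := hAT T
    exact ⟨_, fun t ht => (oscillatorField_lipschitzOnWith hlam hp.le (hM t ht)
      (le_max_right R 0)).mono (closedBall_subset_closedBall (le_max_left R 0))⟩
  · obtain ⟨M, hM⟩ := hAT T
    refine ⟨√(oscillatorEnergy lam p z₀ * Real.exp ((1 + M) * T)), fun s hs γ hγ0 hγ => ?_⟩
    have hM0 : 0 ≤ M := (abs_nonneg _).trans (hM 0 (left_mem_Icc.2 (hs.1.trans hs.2)))
    have hE := hγ.oscillatorEnergy_le hlam (by linarith)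
      (fun t ht => hM t ⟨ht.1, ht.2.trans hs.2⟩) s (right_mem_Icc.2 hs.1)
    rw [hγ0, sub_zero] at hE
    refine (norm_le_sqrt_oscillatorEnergy hlam (by linarith) _).trans
      (Real.sqrt_le_sqrt (hE.trans ?_))
    have := sq_norm_add_sq_norm_le_oscillatorEnergy hlam (by linarith : -1 < p) z₀
    gcongr
    · linarith [sq_nonneg ‖z₀.1‖, sq_nonneg ‖z₀.2‖]
    · exact hs.2

end Energy

section Coefficient

variable {n : ℕ} {σ a₀ a₁ c e : ℝ}

theorem scaleFun_of_ne_neg_one (hσ : σ ≠ -1) (t : ℝ) :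
    scaleFun n σ a₀ a₁ t = a₀ * (1 + n * (1 + σ) * a₁ / (2 * a₀) * t) ^ (2 / (n * (1 + σ))) := by
  rw [scaleFun, if_neg hσ]
  ring_nf

theorem isOpen_setOf_one_add_mul_pos : IsOpen {t : ℝ | 0 < 1 + c * t} :=
  isOpen_lt continuous_const (by fun_prop)

theorem q0Fun_eq (hscale : ∀ t, scaleFun n σ a₀ a₁ t = a₀ * (1 + c * t) ^ e)
    (ha₀ : a₀ ≠ 0) {t : ℝ} (ht : 0 < 1 + c * t) :
    q0Fun n σ a₀ a₁ t = 2 * e * c / (1 + c * t) := by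
  have hsq : ∀ s, 0 < 1 + c * s → scaleFun n σ a₀ a₁ s ^ 2 = a₀ ^ 2 * (1 + c * s) ^ (2 * e) := by
    intro s hs
    rw [hscale, mul_pow, ← Real.rpow_natCast ((1 + c * s) ^ e), ← Real.rpow_mul hs.le]
    norm_num [mul_comm]
  have hderiv : HasDerivAt (fun s => scaleFun n σ a₀ a₁ s ^ 2)
      (a₀ ^ 2 * (c * (2 * e) * (1 + c * t) ^ (2 * e - 1))) t := by
    refine HasDerivAt.congr_of_eventuallyEq ?_
      (Filter.eventuallyEq_of_mem (isOpen_setOf_one_add_mul_pos.mem_nhds ht) fun s hs => hsq s hs)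
    simpa using (((hasDerivAt_id t).const_mul c).const_add 1).rpow_const
      (p := 2 * e) (Or.inl ht.ne') |>.const_mul (a₀ ^ 2)
  rw [q0Fun, hderiv.deriv, hsq t ht, Real.rpow_sub_one ht.ne']
  field_simp

theorem AFun_eq (hscale : ∀ t, scaleFun n σ a₀ a₁ t = a₀ * (1 + c * t) ^ e)
    (ha₀ : a₀ ≠ 0) {t : ℝ} (ht : 0 < 1 + c * t) :
    AFun n σ a₀ a₁ t = e * (1 - e) * c ^ 2 / (1 + c * t) ^ 2 := by
  have hq0 : q0Fun n σ a₀ a₁ =ᶠ[𝓝 t] fun s => 2 * e * c * (1 + c * s)⁻¹ :=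
    Filter.eventuallyEq_of_mem (isOpen_setOf_one_add_mul_pos.mem_nhds ht)
      fun s hs => by rw [q0Fun_eq hscale ha₀ hs, div_eq_mul_inv]
  have hderiv : HasDerivAt (fun s => 2 * e * c * (1 + c * s)⁻¹)
      (2 * e * c * (-c / (1 + c * t) ^ 2)) t := by
    simpa using ((((hasDerivAt_id t).const_mul c).const_add 1).inv ht.ne').const_mul (2 * e * c)
  rw [AFun, hq0.deriv_eq, hderiv.deriv, q0Fun_eq hscale ha₀ ht]
  field_simp
  ring

theorem continuousOn_AFun (hscale : ∀ t, scaleFun n σ a₀ a₁ t = a₀ * (1 + c * t) ^ e)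
    (ha₀ : a₀ ≠ 0) : ContinuousOn (AFun n σ a₀ a₁) {t | 0 < 1 + c * t} := by
  refine ContinuousOn.congr ?_ fun t ht => AFun_eq hscale ha₀ ht
  exact continuousOn_const.div (by fun_prop) fun t ht => pow_ne_zero 2 (ne_of_gt ht)

end Coefficient

theorem stmt_2_general (n : ℕ) (σ a₀ a₁ lam p : ℝ)
    (ha₀ : 0 < a₀) (ha₁ : 0 < a₁) (hσ : -1 + 2 / (n : ℝ) < σ) (hp : 1 < p)
    (hlam : 0 ≤ lam)
    (Y₀ Y₁ : EuclideanSpace ℝ (Fin n)) :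
    ∃ Y Y' : ℝ → EuclideanSpace ℝ (Fin n),
      (∀ t ∈ Ici (0 : ℝ), HasDerivWithinAt Y (Y' t) (Ici (0 : ℝ)) t) ∧
      (∀ t ∈ Ici (0 : ℝ), HasDerivWithinAt Y'
        (-(AFun n σ a₀ a₁ t • Y t) - (lam * ‖Y t‖ ^ (p - 1)) • Y t) (Ici (0 : ℝ)) t) ∧
      ContinuousOn Y' (Ici (0 : ℝ)) ∧
      Y 0 = Y₀ ∧ Y' 0 = Y₁ := by
  have hσ₁ : 0 < 1 + σ := by
    have : (0 : ℝ) ≤ 2 / n := by positivity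
    linarith
  have hA : ContinuousOn (AFun n σ a₀ a₁) (Ici 0) :=
    (continuousOn_AFun (scaleFun_of_ne_neg_one (by linarith)) ha₀.ne').mono fun t (ht : 0 ≤ t) => by
      show 0 < 1 + n * (1 + σ) * a₁ / (2 * a₀) * t
      positivity
  obtain ⟨γ, hγ0, hγ⟩ := exists_isIntegralCurveOn_oscillatorField hA hlam hp (Y₀, Y₁)
  exact ⟨fun t => (γ t).1, fun t => (γ t).2, fun t ht => (hγ t ht).fst, fun t ht => (hγ t ht).snd,
    fun t ht => (hγ t ht).snd.continuousWithinAt, by simp [hγ0], by simp [hγ0]⟩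

/-- Case (i): `a₁ > 0`, `σ > -1 + 2/n`, `λ ≥ 0`. Global existence of a `C¹` solution of
`D_t²Y + A(t)Y + λ|Y|^{p-1}Y = 0`, `Y(0) = Y₀`, `D_tY(0) = Y₁`, on `[0, ∞)`. -/
theorem stmt_2 (n : ℕ) (hn : 1 ≤ n) (σ a₀ a₁ lam p : ℝ)
    (ha₀ : 0 < a₀) (ha₁ : 0 < a₁) (hσ : -1 + 2 / (n : ℝ) < σ) (hp : 1 < p)
    (hlam : 0 ≤ lam)
    (Y₀ Y₁ : EuclideanSpace ℝ (Fin n)) :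
    ∃ Y Y' : ℝ → EuclideanSpace ℝ (Fin n),
      (∀ t ∈ Ici (0 : ℝ), HasDerivWithinAt Y (Y' t) (Ici (0 : ℝ)) t) ∧
      (∀ t ∈ Ici (0 : ℝ), HasDerivWithinAt Y'
        (-(AFun n σ a₀ a₁ t • Y t) - (lam * ‖Y t‖ ^ (p - 1)) • Y t) (Ici (0 : ℝ)) t) ∧
      ContinuousOn Y' (Ici (0 : ℝ)) ∧
      Y 0 = Y₀ ∧ Y' 0 = Y₁ :=
  stmt_2_general n σ a₀ a₁ lam p ha₀ ha₁ hσ hp hlam Y₀ Y₁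
end

section
/- Assume either a₁ = 0 and σ ∈ ℝ (case (ii)), or a₁ ≠ 0 and σ = −1 + 2/n (case (iii)); in both cases A ≡ 0 on [0,T₁). Then there exist constants C₀ > 0 and C > 0, independent of the data, such that for any Y₀, Y₁ ∈ ℝⁿ, any R₀ ≥ 2|Y₀|, any R₁ ≥ C₀|Y₁|, and any T with 0 < T ≤ min{ C/R₀^{p−1}, C/R₀^{(p−1)/2}, C·R₁/R₀^p, R₀/(2R₁) }, the Cauchy problem D_t²Y(t) + λ|Y(t)|^{p−1}Y(t) = 0 on [0,T), Y(0) = Y₀, D_tY(0) = Y₁, has a unique solution Y ∈ C¹([0,T)) with ‖Y‖_{L^∞((0,T))} ≤ R₀ and ‖D_tY‖_{L^∞((0,T))} ≤ R₁. -/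
open Set Metric
open scoped NNReal

/-!
For `p ≥ 1` the force `y ↦ -λ‖y‖^{p-1} y` is Lipschitz on every ball `‖y‖ ≤ R₀`, with
`‖-λ‖y‖^{p-1} y‖ ≤ |λ| R₀^p` there. Write the equation as the first-order system
`u = (Y, α D_tY)` with `α = R₀/R₁`, so that the ball of radius `R₀/2` about `(Y₀, α Y₁)` lies in
`{‖Y‖ ≤ R₀, ‖D_tY‖ ≤ R₁}`. With `C₀ = 2` and `C = 1/(2(1+|λ|))`, the conditions `T ≤ R₀/(2R₁)`
and `T ≤ C R₁/R₀^p` say exactly that the Picard–Lindelöf solution cannot leave this ball before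
time `T`. Uniqueness follows from Grönwall, because the system is Lipschitz wherever `‖Y‖ ≤ R₀`.
-/

lemma one_sub_rpow_le_max_mul {q t : ℝ} (ht₀ : 0 ≤ t) (ht₁ : t ≤ 1) :
    1 - t ^ q ≤ max 1 q * (1 - t) := by
  rcases le_total q 1 with hq₁ | hq₁
  · have := Real.self_le_rpow_of_le_one ht₀ ht₁ hq₁
    nlinarith [le_max_left 1 q]
  · have := one_add_mul_self_le_rpow_one_add (s := t - 1) (by linarith) hq₁
    rw [add_sub_cancel] at this
    nlinarith [le_max_right 1 q]

lemma rpow_sub_rpow_mul_le_s3 {q x y : ℝ} (hy : 0 ≤ y) (hyx : y ≤ x) :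
    (x ^ q - y ^ q) * x ≤ max 1 q * x ^ q * (x - y) := by
  obtain rfl | hx := (hy.trans hyx).eq_or_lt
  · obtain rfl : y = 0 := le_antisymm hyx hy
    simp
  have ht₀ : 0 ≤ y / x := div_nonneg hy hx.le
  have hyq : y ^ q = (y / x) ^ q * x ^ q := by
    rw [← Real.mul_rpow ht₀ hx.le, div_mul_cancel₀ y hx.ne']
  calc (x ^ q - y ^ q) * x = x ^ q * (1 - (y / x) ^ q) * x := by rw [hyq]; ring
    _ ≤ x ^ q * (max 1 q * (1 - y / x)) * x := by
      gcongr
      exact one_sub_rpow_le_max_mul ht₀ ((div_le_one hx).2 hyx)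
    _ = max 1 q * x ^ q * (x - y) := by field_simp

theorem IsPicardLindelof.exists_eq_forall_mem_Icc_mem_closedBall_hasDerivWithinAt
    {E : Type*} [NormedAddCommGroup E] [NormedSpace ℝ E] [CompleteSpace E]
    {f : ℝ → E → E} {tmin tmax : ℝ} {t₀ : Icc tmin tmax} {x₀ : E} {a L K : ℝ≥0}
    (hf : IsPicardLindelof f t₀ x₀ a 0 L K) :
    ∃ α : ℝ → E, α t₀ = x₀ ∧ ∀ t ∈ Icc tmin tmax,
      α t ∈ closedBall x₀ a ∧ HasDerivWithinAt α (f t (α t)) (Icc tmin tmax) t := by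
  obtain ⟨α, hα⟩ := ODE.FunSpace.exists_isFixedPt_next hf (mem_closedBall_self le_rfl)
  have hmem (t : ℝ) : α.compProj t ∈ closedBall x₀ a := α.compProj_mem_closedBall hf.mul_max_le
  refine ⟨α.compProj, by rw [ODE.FunSpace.compProj_val, ← hα, ODE.FunSpace.next_apply₀],
    fun t ht ↦ ⟨hmem t, ?_⟩⟩
  refine ODE.hasDerivWithinAt_picard_Icc t₀.2 hf.continuousOn_uncurry
    α.continuous_compProj.continuousOn (fun t _ ↦ hmem t) x₀ ht
    |>.congr_of_mem (fun t' ht' ↦ ?_) ht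
  nth_rw 1 [← hα]
  rw [ODE.FunSpace.compProj_of_mem ht', ODE.FunSpace.next_apply]

lemma norm_fst_le_and_norm_snd_le_of_mem_closedBall {E G : Type*} [SeminormedAddCommGroup E]
    [SeminormedAddCommGroup G] {x₀ u : E × G} {r : ℝ} (hu : u ∈ closedBall x₀ r) :
    ‖u.1‖ ≤ ‖x₀.1‖ + r ∧ ‖u.2‖ ≤ ‖x₀.2‖ + r := by
  rw [mem_closedBall, Prod.dist_eq, max_le_iff, dist_eq_norm, dist_eq_norm] at hu
  exact ⟨by linarith [norm_le_norm_sub_add u.1 x₀.1], by linarith [norm_le_norm_sub_add u.2 x₀.2]⟩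

section

variable {E : Type*} [NormedAddCommGroup E] [NormedSpace ℝ E]

lemma norm_rpow_smul_sub_rpow_smul_le_of_norm_le {q R : ℝ} (hq : 0 ≤ q) {a b : E}
    (hba : ‖b‖ ≤ ‖a‖) (ha : ‖a‖ ≤ R) :
    ‖‖a‖ ^ q • a - ‖b‖ ^ q • b‖ ≤ (max 1 q + 1) * R ^ q * ‖a - b‖ := by
  have hbq : ‖b‖ ^ q ≤ R ^ q := by gcongr; exact hba.trans ha
  have hmono : ‖b‖ ^ q ≤ ‖a‖ ^ q := by gcongr
  have hscalar := rpow_sub_rpow_mul_le_s3 (q := q) (norm_nonneg b) hba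
  have haq : max 1 q * ‖a‖ ^ q * (‖a‖ - ‖b‖) ≤ max 1 q * R ^ q * ‖a - b‖ := by
    have hR : 0 ≤ R := (norm_nonneg a).trans ha
    exact mul_le_mul (by gcongr) (norm_sub_norm_le a b) (sub_nonneg.2 hba) (by positivity)
  calc ‖‖a‖ ^ q • a - ‖b‖ ^ q • b‖
      = ‖‖b‖ ^ q • (a - b) + (‖a‖ ^ q - ‖b‖ ^ q) • a‖ := by
        rw [smul_sub, sub_smul]; abel_nf
    _ ≤ ‖b‖ ^ q * ‖a - b‖ + (‖a‖ ^ q - ‖b‖ ^ q) * ‖a‖ := by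
        refine (norm_add_le _ _).trans_eq ?_
        rw [norm_smul, norm_smul, Real.norm_of_nonneg (by positivity),
          Real.norm_of_nonneg (sub_nonneg.2 hmono)]
    _ ≤ R ^ q * ‖a - b‖ + max 1 q * R ^ q * ‖a - b‖ :=
        add_le_add (mul_le_mul_of_nonneg_right hbq (norm_nonneg _)) (hscalar.trans haq)
    _ = (max 1 q + 1) * R ^ q * ‖a - b‖ := by ring

lemma norm_rpow_smul_sub_rpow_smul_le_s3 {q R : ℝ} (hq : 0 ≤ q) {a b : E}
    (ha : ‖a‖ ≤ R) (hb : ‖b‖ ≤ R) :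
    ‖‖a‖ ^ q • a - ‖b‖ ^ q • b‖ ≤ (max 1 q + 1) * R ^ q * ‖a - b‖ := by
  rcases le_total ‖b‖ ‖a‖ with hba | hab
  · exact norm_rpow_smul_sub_rpow_smul_le_of_norm_le hq hba ha
  · rw [norm_sub_rev, norm_sub_rev a]
    exact norm_rpow_smul_sub_rpow_smul_le_of_norm_le hq hab hb

lemma lipschitzOnWith_rpow_smul {q R : ℝ} (hq : 0 ≤ q) :
    LipschitzOnWith ((max 1 q + 1) * R ^ q).toNNReal (fun a : E ↦ ‖a‖ ^ q • a)
      (closedBall 0 R) := by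
  refine LipschitzOnWith.of_dist_le' fun a ha b hb ↦ ?_
  rw [mem_closedBall_zero_iff] at ha hb
  rw [dist_eq_norm, dist_eq_norm]
  exact norm_rpow_smul_sub_rpow_smul_le_s3 hq ha hb

lemma lipschitzOnWith_neg_mul_rpow_smul (c : ℝ) {q R : ℝ} (hq : 0 ≤ q) :
    LipschitzOnWith (‖c‖₊ * ((max 1 q + 1) * R ^ q).toNNReal)
      (fun y : E ↦ -((c * ‖y‖ ^ q) • y)) (closedBall 0 R) := by
  have hfun : (fun y : E ↦ -((c * ‖y‖ ^ q) • y)) = (fun y ↦ -c • y) ∘ fun y ↦ ‖y‖ ^ q • y := by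
    funext y
    simp [mul_smul]
  rw [hfun, ← nnnorm_neg c]
  exact (lipschitzWith_smul (-c)).comp_lipschitzOnWith (lipschitzOnWith_rpow_smul hq)

lemma norm_neg_mul_rpow_smul_le (c : ℝ) {q R : ℝ} (hq : 0 ≤ q) {y : E} (hy : ‖y‖ ≤ R) :
    ‖-((c * ‖y‖ ^ q) • y)‖ ≤ |c| * R ^ (q + 1) := by
  rw [norm_neg, norm_smul, norm_mul, Real.norm_eq_abs, Real.norm_of_nonneg (by positivity),
    mul_assoc, ← Real.rpow_add_one' (norm_nonneg y) (by linarith)]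
  gcongr

theorem ODE_solution_unique_of_mem_Ico {v : E → E} {s : Set E} {K : ℝ≥0} {f g : ℝ → E}
    {a b : ℝ} (hv : LipschitzOnWith K v s)
    (hf : ∀ t ∈ Ico a b, HasDerivWithinAt f (v (f t)) (Ico a b) t ∧ f t ∈ s)
    (hg : ∀ t ∈ Ico a b, HasDerivWithinAt g (v (g t)) (Ico a b) t ∧ g t ∈ s)
    (ha : f a = g a) : EqOn f g (Ico a b) := by
  intro t ht
  have hsub : Icc a t ⊆ Ico a b := Icc_subset_Ico_right ht.2
  have hsol (h : ℝ → E) (hh : ∀ t ∈ Ico a b, HasDerivWithinAt h (v (h t)) (Ico a b) t ∧ h t ∈ s) :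
      ContinuousOn h (Icc a t) ∧ ∀ τ ∈ Ico a t, HasDerivWithinAt h (v (h τ)) (Ici τ) τ :=
    ⟨fun τ hτ ↦ (hh τ (hsub hτ)).1.continuousWithinAt.mono hsub, fun τ hτ ↦
      (hh τ (hsub (Ico_subset_Icc_self hτ))).1.mono_of_mem_nhdsWithin
        (Ico_mem_nhdsGE_of_mem (hsub (Ico_subset_Icc_self hτ)))⟩
  exact ODE_solution_unique_of_mem_Icc_right (v := fun _ ↦ v) (s := fun _ ↦ s)
    (fun _ _ ↦ hv) (hsol f hf).1 (hsol f hf).2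
    (fun τ hτ ↦ (hf τ (hsub (Ico_subset_Icc_self hτ))).2) (hsol g hg).1 (hsol g hg).2
    (fun τ hτ ↦ (hg τ (hsub (Ico_subset_Icc_self hτ))).2) ha ⟨ht.1, le_rfl⟩

/-- The equation `Y'' = F Y` as a first-order system in the variables `(Y, α • Y')`. -/
noncomputable def secondOrderField (α : ℝ) (F : E → E) (u : E × E) : E × E :=
  (α⁻¹ • u.2, α • F u.1)

lemma lipschitzOnWith_secondOrderField (α : ℝ) {F : E → E} {K : ℝ≥0} {s : Set E}
    (hF : LipschitzOnWith K F s) :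
    LipschitzOnWith (max ‖α⁻¹‖₊ (‖α‖₊ * K)) (secondOrderField α F) (Prod.fst ⁻¹' s) := by
  have h : LipschitzOnWith (max (‖α⁻¹‖₊ * 1) (‖α‖₊ * (K * 1))) (secondOrderField α F)
      (Prod.fst ⁻¹' s) :=
    ((lipschitzWith_smul α⁻¹).comp LipschitzWith.prod_snd).lipschitzOnWith.prodMk
      ((lipschitzWith_smul α).comp_lipschitzOnWith
        (hF.comp LipschitzWith.prod_fst.lipschitzOnWith fun _ h ↦ h))
  simpa only [mul_one] using h

lemma HasDerivWithinAt.prodMk_smul_secondOrderField {α : ℝ} (hα : α ≠ 0) {F : E → E}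
    {Y Y' : ℝ → E} {s : Set ℝ} {t : ℝ} (hY : HasDerivWithinAt Y (Y' t) s t)
    (hY' : HasDerivWithinAt Y' (F (Y t)) s t) :
    HasDerivWithinAt (fun τ ↦ (Y τ, α • Y' τ)) (secondOrderField α F (Y t, α • Y' t)) s t := by
  rw [secondOrderField, inv_smul_smul₀ hα]
  exact hY.prodMk (hY'.const_smul α)

lemma HasDerivWithinAt.of_secondOrderField {α : ℝ} (hα : α ≠ 0) {F : E → E}
    {u : ℝ → E × E} {s : Set ℝ} {t : ℝ}
    (hu : HasDerivWithinAt u (secondOrderField α F (u t)) s t) :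
    HasDerivWithinAt (fun τ ↦ (u τ).1) (α⁻¹ • (u t).2) s t ∧
      HasDerivWithinAt (fun τ ↦ α⁻¹ • (u τ).2) (F (u t).1) s t := by
  refine ⟨(ContinuousLinearMap.fst ℝ E E).hasFDerivAt.comp_hasDerivWithinAt t hu, ?_⟩
  have h : HasDerivWithinAt (fun τ ↦ α⁻¹ • (u τ).2) (α⁻¹ • α • F (u t).1) s t :=
    ((ContinuousLinearMap.snd ℝ E E).hasFDerivAt.comp_hasDerivWithinAt t hu).const_smul α⁻¹
  rwa [inv_smul_smul₀ hα] at h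

lemma norm_le_of_mem_closedBall_rescaled {R₀ R₁ : ℝ} {Y₀ Y₁ : E} {u : E × E} (hR₁ : 0 < R₁)
    (hY₀ : 2 * ‖Y₀‖ ≤ R₀) (hY₁ : 2 * ‖Y₁‖ ≤ R₁)
    (hu : u ∈ closedBall (Y₀, (R₀ / R₁) • Y₁) (R₀ / 2)) : ‖u.1‖ ≤ R₀ ∧ ‖u.2‖ ≤ R₀ := by
  have hR₀ : 0 ≤ R₀ := le_trans (by positivity) hY₀
  have hαY₁ : 2 * ‖(R₀ / R₁) • Y₁‖ ≤ R₀ := by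
    rw [norm_smul, Real.norm_of_nonneg (by positivity)]
    calc 2 * (R₀ / R₁ * ‖Y₁‖) = R₀ / R₁ * (2 * ‖Y₁‖) := by ring
      _ ≤ R₀ / R₁ * R₁ := by gcongr
      _ = R₀ := div_mul_cancel₀ _ hR₁.ne'
  obtain ⟨h₁, h₂⟩ := norm_fst_le_and_norm_snd_le_of_mem_closedBall hu
  exact ⟨by linarith, by linarith⟩

lemma isPicardLindelof_secondOrderField {F : E → E} {K : ℝ≥0} {M R₀ R₁ T : ℝ} {Y₀ Y₁ : E}
    (hF : LipschitzOnWith K F (closedBall 0 R₀)) (hFM : ∀ y ∈ closedBall 0 R₀, ‖F y‖ ≤ M)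
    (hR₁ : 0 < R₁) (hT : 0 < T) (hY₀ : 2 * ‖Y₀‖ ≤ R₀) (hY₁ : 2 * ‖Y₁‖ ≤ R₁)
    (hTR : 2 * T * R₁ ≤ R₀) (hTM : 2 * T * M ≤ R₁) :
    IsPicardLindelof (fun _ ↦ secondOrderField (R₀ / R₁) F)
      (⟨0, left_mem_Icc.2 hT.le⟩ : Icc 0 T) (Y₀, (R₀ / R₁) • Y₁) (R₀ / 2).toNNReal 0
      (max R₁ (R₀ / R₁ * M)).toNNReal (max ‖(R₀ / R₁)⁻¹‖₊ (‖R₀ / R₁‖₊ * K)) := by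
  have hR₀ : 0 < R₀ := by nlinarith
  have hr : ((R₀ / 2).toNNReal : ℝ) = R₀ / 2 := Real.coe_toNNReal _ (by positivity)
  have hL : ((max R₁ (R₀ / R₁ * M)).toNNReal : ℝ) = max R₁ (R₀ / R₁ * M) :=
    Real.coe_toNNReal _ (hR₁.le.trans (le_max_left _ _))
  have hball (u) (hu : u ∈ closedBall (Y₀, (R₀ / R₁) • Y₁) (R₀ / 2).toNNReal) :=
    norm_le_of_mem_closedBall_rescaled hR₁ hY₀ hY₁ (hr ▸ hu)
  refine ⟨fun _ _ ↦ (lipschitzOnWith_secondOrderField _ hF).mono fun u hu ↦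
    mem_closedBall_zero_iff.2 (hball u hu).1, fun _ _ ↦ continuousOn_const,
    fun _ _ u hu ↦ ?_, ?_⟩
  · obtain ⟨h₁, h₂⟩ := hball u hu
    have hM : ‖F u.1‖ ≤ M := hFM _ (mem_closedBall_zero_iff.2 h₁)
    rw [hL, secondOrderField, Prod.norm_def, norm_smul, norm_smul, Real.norm_of_nonneg
      (by positivity), Real.norm_of_nonneg (by positivity), inv_div]
    refine max_le_max ?_ (by gcongr)
    calc R₁ / R₀ * ‖u.2‖ ≤ R₁ / R₀ * R₀ := by gcongr
      _ = R₁ := div_mul_cancel₀ _ hR₀.ne'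
  · rw [hr, hL]
    simp only [NNReal.coe_zero, sub_zero, max_eq_left hT.le, max_mul_of_nonneg _ _ hT.le]
    refine max_le (by linarith) ?_
    calc R₀ / R₁ * M * T = R₀ / R₁ * (2 * T * M) / 2 := by ring
      _ ≤ R₀ / R₁ * R₁ / 2 := by gcongr
      _ = R₀ / 2 := by rw [div_mul_cancel₀ _ hR₁.ne']

theorem exists_hasDerivWithinAt_secondOrder [CompleteSpace E] {F : E → E} {K : ℝ≥0}
    {M R₀ R₁ T : ℝ} {Y₀ Y₁ : E} (hF : LipschitzOnWith K F (closedBall 0 R₀))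
    (hFM : ∀ y ∈ closedBall 0 R₀, ‖F y‖ ≤ M) (hR₁ : 0 < R₁) (hT : 0 < T)
    (hY₀ : 2 * ‖Y₀‖ ≤ R₀) (hY₁ : 2 * ‖Y₁‖ ≤ R₁) (hTR : 2 * T * R₁ ≤ R₀) (hTM : 2 * T * M ≤ R₁) :
    ∃ Y Y' : ℝ → E, Y 0 = Y₀ ∧ Y' 0 = Y₁ ∧ ∀ t ∈ Icc 0 T,
      HasDerivWithinAt Y (Y' t) (Icc 0 T) t ∧ HasDerivWithinAt Y' (F (Y t)) (Icc 0 T) t ∧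
        ‖Y t‖ ≤ R₀ ∧ ‖Y' t‖ ≤ R₁ := by
  have hR₀ : 0 < R₀ := by nlinarith
  have hα : 0 < R₀ / R₁ := div_pos hR₀ hR₁
  obtain ⟨u, hu₀, hu⟩ := (isPicardLindelof_secondOrderField hF hFM hR₁ hT hY₀ hY₁ hTR hTM)
    |>.exists_eq_forall_mem_Icc_mem_closedBall_hasDerivWithinAt
  have hu₀' : u 0 = (Y₀, (R₀ / R₁) • Y₁) := hu₀
  refine ⟨fun t ↦ (u t).1, fun t ↦ (R₀ / R₁)⁻¹ • (u t).2, by simp only [hu₀'],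
    by simp only [hu₀', inv_smul_smul₀ hα.ne'], fun t ht ↦ ?_⟩
  obtain ⟨hut, hu'⟩ := hu t ht
  obtain ⟨h₁, h₂⟩ := norm_le_of_mem_closedBall_rescaled hR₁ hY₀ hY₁
    (by rwa [Real.coe_toNNReal _ (by positivity : 0 ≤ R₀ / 2)] at hut)
  refine ⟨(hu'.of_secondOrderField hα.ne').1, (hu'.of_secondOrderField hα.ne').2, h₁, ?_⟩
  rw [norm_smul, Real.norm_of_nonneg (by positivity), inv_div]
  calc R₁ / R₀ * ‖(u t).2‖ ≤ R₁ / R₀ * R₀ := by gcongr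
    _ = R₁ := div_mul_cancel₀ _ hR₀.ne'

theorem eqOn_Ico_of_hasDerivWithinAt_secondOrder {F : E → E} {K : ℝ≥0} {R T : ℝ}
    {Y Y' Z Z' : ℝ → E} (hF : LipschitzOnWith K F (closedBall 0 R))
    (hY : ∀ t ∈ Ico 0 T, HasDerivWithinAt Y (Y' t) (Ico 0 T) t)
    (hY' : ∀ t ∈ Ico 0 T, HasDerivWithinAt Y' (F (Y t)) (Ico 0 T) t)
    (hYR : ∀ t ∈ Ico 0 T, ‖Y t‖ ≤ R)
    (hZ : ∀ t ∈ Ico 0 T, HasDerivWithinAt Z (Z' t) (Ico 0 T) t)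
    (hZ' : ∀ t ∈ Ico 0 T, HasDerivWithinAt Z' (F (Z t)) (Ico 0 T) t)
    (hZR : ∀ t ∈ Ico 0 T, ‖Z t‖ ≤ R) (h₀ : Y 0 = Z 0) (h₀' : Y' 0 = Z' 0) :
    EqOn Y Z (Ico 0 T) := fun t ht ↦ congrArg Prod.fst <|
  ODE_solution_unique_of_mem_Ico (lipschitzOnWith_secondOrderField 1 hF)
    (f := fun τ ↦ (Y τ, (1 : ℝ) • Y' τ)) (g := fun τ ↦ (Z τ, (1 : ℝ) • Z' τ))
    (fun τ hτ ↦ ⟨(hY τ hτ).prodMk_smul_secondOrderField one_ne_zero (hY' τ hτ),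
      mem_closedBall_zero_iff.2 (hYR τ hτ)⟩)
    (fun τ hτ ↦ ⟨(hZ τ hτ).prodMk_smul_secondOrderField one_ne_zero (hZ' τ hτ),
      mem_closedBall_zero_iff.2 (hZR τ hτ)⟩)
    (by rw [h₀, h₀']) ht

end

lemma two_mul_mul_abs_mul_le_of_le_div {lam A R T : ℝ} (hR : 0 ≤ R) (hA : 0 < A)
    (hT : T ≤ 1 / (2 * (1 + |lam|)) * R / A) : 2 * T * (|lam| * A) ≤ R := by
  rw [le_div_iff₀ hA] at hT
  calc 2 * T * (|lam| * A) = 2 * |lam| * (T * A) := by ring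
    _ ≤ 2 * |lam| * (1 / (2 * (1 + |lam|)) * R) := by gcongr
    _ = |lam| / (1 + |lam|) * R := by field_simp
    _ ≤ R := mul_le_of_le_one_left hR ((div_le_one (by positivity)).2 (by linarith))

theorem stmt_3_general (n : ℕ) (lam p : ℝ) (hp : 1 < p) :
    ∃ C₀ C : ℝ, 0 < C₀ ∧ 0 < C ∧
      ∀ (Y₀ Y₁ : EuclideanSpace ℝ (Fin n)) (R₀ R₁ T : ℝ),
        2 * ‖Y₀‖ ≤ R₀ → C₀ * ‖Y₁‖ ≤ R₁ → 0 < T →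
        T ≤ min (min (C / R₀ ^ (p - 1)) (C / R₀ ^ ((p - 1) / 2)))
              (min (C * R₁ / R₀ ^ p) (R₀ / (2 * R₁))) →
        ∃ Y Y' : ℝ → EuclideanSpace ℝ (Fin n),
          ((∀ t ∈ Ico (0 : ℝ) T, HasDerivWithinAt Y (Y' t) (Ico (0 : ℝ) T) t) ∧
           (∀ t ∈ Ico (0 : ℝ) T, HasDerivWithinAt Y'
             (-((lam * ‖Y t‖ ^ (p - 1)) • Y t)) (Ico (0 : ℝ) T) t) ∧
           ContinuousOn Y' (Ico (0 : ℝ) T) ∧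
           Y 0 = Y₀ ∧ Y' 0 = Y₁ ∧
           (∀ t ∈ Ico (0 : ℝ) T, ‖Y t‖ ≤ R₀) ∧
           (∀ t ∈ Ico (0 : ℝ) T, ‖Y' t‖ ≤ R₁)) ∧
          (∀ Z Z' : ℝ → EuclideanSpace ℝ (Fin n),
            (∀ t ∈ Ico (0 : ℝ) T, HasDerivWithinAt Z (Z' t) (Ico (0 : ℝ) T) t) →
            (∀ t ∈ Ico (0 : ℝ) T, HasDerivWithinAt Z'
              (-((lam * ‖Z t‖ ^ (p - 1)) • Z t)) (Ico (0 : ℝ) T) t) →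
            ContinuousOn Z' (Ico (0 : ℝ) T) →
            Z 0 = Y₀ → Z' 0 = Y₁ →
            (∀ t ∈ Ico (0 : ℝ) T, ‖Z t‖ ≤ R₀) →
            (∀ t ∈ Ico (0 : ℝ) T, ‖Z' t‖ ≤ R₁) →
            ∀ t ∈ Ico (0 : ℝ) T, Z t = Y t) := by
  have hq : 0 ≤ p - 1 := by linarith
  refine ⟨2, 1 / (2 * (1 + |lam|)), two_pos, by positivity, ?_⟩
  intro Y₀ Y₁ R₀ R₁ T hY₀ hY₁ hT hTle
  simp only [le_min_iff] at hTle
  obtain ⟨-, hTC, hTR⟩ := hTle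
  have hR₁ : 0 < R₁ := by
    refine lt_of_le_of_ne (le_trans (by positivity) hY₁) fun h ↦ ?_
    rw [← h, mul_zero, div_zero] at hTR
    linarith
  have hTR' : 2 * T * R₁ ≤ R₀ := by
    rw [le_div_iff₀ (by positivity)] at hTR
    linarith
  have hR₀ : 0 < R₀ := by nlinarith
  have hTM : 2 * T * (|lam| * R₀ ^ (p - 1 + 1)) ≤ R₁ := by
    rw [sub_add_cancel]
    exact two_mul_mul_abs_mul_le_of_le_div hR₁.le (by positivity) hTC
  have hF := lipschitzOnWith_neg_mul_rpow_smul (E := EuclideanSpace ℝ (Fin n)) lam (R := R₀) hq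
  obtain ⟨Y, Y', hY₀', hY₁', hY⟩ := exists_hasDerivWithinAt_secondOrder hF
    (fun y hy ↦ norm_neg_mul_rpow_smul_le lam hq (mem_closedBall_zero_iff.1 hy))
    hR₁ hT hY₀ hY₁ hTR' hTM
  have hIco : Ico 0 T ⊆ Icc 0 T := Ico_subset_Icc_self
  have hY' (t) (ht : t ∈ Ico 0 T) := (hY t (hIco ht)).2.1.mono hIco
  refine ⟨Y, Y', ⟨fun t ht ↦ (hY t (hIco ht)).1.mono hIco, hY',
    fun t ht ↦ (hY' t ht).continuousWithinAt, hY₀', hY₁', fun t ht ↦ (hY t (hIco ht)).2.2.1,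
    fun t ht ↦ (hY t (hIco ht)).2.2.2⟩, fun Z Z' hZ hZ' _ hZ₀ hZ₁ hZR _ ↦ ?_⟩
  exact eqOn_Ico_of_hasDerivWithinAt_secondOrder hF hZ hZ' hZR
    (fun t ht ↦ (hY t (hIco ht)).1.mono hIco) hY' (fun t ht ↦ (hY t (hIco ht)).2.2.1)
    (hZ₀.trans hY₀'.symm) (hZ₁.trans hY₁'.symm)

/-- Cases (ii) and (iii): `a₁ = 0`, or `a₁ ≠ 0` and `σ = -1 + 2/n` (so that `A ≡ 0`).
Local existence and uniqueness of a `C¹` solution of `D_t²Y + λ|Y|^{p-1}Y = 0`,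
`Y(0) = Y₀`, `D_tY(0) = Y₁`, with `‖Y‖_{L^∞((0,T))} ≤ R₀` and `‖D_tY‖_{L^∞((0,T))} ≤ R₁`,
for any `T ≤ min{C/R₀^{p-1}, C/R₀^{(p-1)/2}, C·R₁/R₀^p, R₀/(2R₁)}`. -/
theorem stmt_3 (n : ℕ) (hn : 1 ≤ n) (σ a₀ a₁ lam p : ℝ)
    (ha₀ : 0 < a₀) (hp : 1 < p)
    (hcase : a₁ = 0 ∨ (a₁ ≠ 0 ∧ σ = -1 + 2 / (n : ℝ))) :
    ∃ C₀ C : ℝ, 0 < C₀ ∧ 0 < C ∧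
      ∀ (Y₀ Y₁ : EuclideanSpace ℝ (Fin n)) (R₀ R₁ T : ℝ),
        2 * ‖Y₀‖ ≤ R₀ → C₀ * ‖Y₁‖ ≤ R₁ → 0 < T →
        T ≤ min (min (C / R₀ ^ (p - 1)) (C / R₀ ^ ((p - 1) / 2)))
              (min (C * R₁ / R₀ ^ p) (R₀ / (2 * R₁))) →
        ∃ Y Y' : ℝ → EuclideanSpace ℝ (Fin n),
          ((∀ t ∈ Ico (0 : ℝ) T, HasDerivWithinAt Y (Y' t) (Ico (0 : ℝ) T) t) ∧
           (∀ t ∈ Ico (0 : ℝ) T, HasDerivWithinAt Y'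
             (-((lam * ‖Y t‖ ^ (p - 1)) • Y t)) (Ico (0 : ℝ) T) t) ∧
           ContinuousOn Y' (Ico (0 : ℝ) T) ∧
           Y 0 = Y₀ ∧ Y' 0 = Y₁ ∧
           (∀ t ∈ Ico (0 : ℝ) T, ‖Y t‖ ≤ R₀) ∧
           (∀ t ∈ Ico (0 : ℝ) T, ‖Y' t‖ ≤ R₁)) ∧
          (∀ Z Z' : ℝ → EuclideanSpace ℝ (Fin n),
            (∀ t ∈ Ico (0 : ℝ) T, HasDerivWithinAt Z (Z' t) (Ico (0 : ℝ) T) t) →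
            (∀ t ∈ Ico (0 : ℝ) T, HasDerivWithinAt Z'
              (-((lam * ‖Z t‖ ^ (p - 1)) • Z t)) (Ico (0 : ℝ) T) t) →
            ContinuousOn Z' (Ico (0 : ℝ) T) →
            Z 0 = Y₀ → Z' 0 = Y₁ →
            (∀ t ∈ Ico (0 : ℝ) T, ‖Z t‖ ≤ R₀) →
            (∀ t ∈ Ico (0 : ℝ) T, ‖Z' t‖ ≤ R₁) →
            ∀ t ∈ Ico (0 : ℝ) T, Z t = Y t) :=
  stmt_3_general n lam p hp
end
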